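/- For the cycletree numbering combined with routing: since the numbers assigned to any subtree by any of the four numbering modes starting at counter c form the contiguous interval [c, c + size t), at every node of the routed tree one has max − min + 1 = size of that node's subtree. -/

import Mathlib

/-!
`computeRouting` stores at each node the least and greatest label of its subtree, so
`mx - mn + 1` is the size of the subtree wherever that subtree is labelled by an interval.
Each numbering mode hands its root label and its two recursively numbered subtrees three
consecutive blocks of the counter range (root first, in the middle, or last), so by
induction every subtree of a numbered tree is labelled by an interval.
-/

namespace Retreet

inductive BTree where
  | nil : BTree
  | node : BTree → BTree → BTree

inductive LTree where
  | lnil : LTree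
  | lnode : Nat → LTree → LTree → LTree

inductive RTree where
  | rnil : RTree
  | rnode : Nat → Nat → Nat → RTree → RTree → RTree

mutual
def rootMode : BTree → Nat → LTree × Nat
  | .nil, c => (.lnil, c)
  | .node l r, c =>
      let (l', c1) := preMode l (c + 1)
      let (r', c2) := postMode r c1
      (.lnode c l' r', c2)
def preMode : BTree → Nat → LTree × Nat
  | .nil, c => (.lnil, c)
  | .node l r, c =>
      let (l', c1) := preMode l (c + 1)
      let (r', c2) := inMode r c1
      (.lnode c l' r', c2)
def inMode : BTree → Nat → LTree × Nat
  | .nil, c => (.lnil, c)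
  | .node l r, c =>
      let (l', c1) := postMode l c
      let (r', c2) := preMode r (c1 + 1)
      (.lnode c1 l' r', c2)
def postMode : BTree → Nat → LTree × Nat
  | .nil, c => (.lnil, c)
  | .node l r, c =>
      let (l', c1) := inMode l c
      let (r', c2) := postMode r c1
      (.lnode c2 l' r', c2 + 1)
end

def mnOf : RTree → Nat → Nat
  | .rnil, d => d
  | .rnode _ mn _ _ _, _ => mn

def mxOf : RTree → Nat → Nat
  | .rnil, d => d
  | .rnode _ _ mx _ _, _ => mx

def computeRouting : LTree → RTree
  | .lnil => .rnil
  | .lnode n l r =>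
      let l' := computeRouting l
      let r' := computeRouting r
      .rnode n (min n (min (mnOf l' n) (mnOf r' n)))
               (max n (max (mxOf l' n) (mxOf r' n))) l' r'

def rsize : RTree → Nat
  | .rnil => 0
  | .rnode _ _ _ l r => rsize l + rsize r + 1

/-- At every node of the routed tree, `mx - mn + 1` equals the size of the
    subtree rooted at that node. -/
def extremaSpanSize : RTree → Prop
  | .rnil => True
  | .rnode n mn mx l r =>
      mx - mn + 1 = rsize (.rnode n mn mx l r) ∧ extremaSpanSize l ∧ extremaSpanSize r

theorem _root_.Finset.min_Ico {α : Type*} [LinearOrder α] [LocallyFiniteOrder α] {a b : α}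
    (h : a < b) : (Finset.Ico a b).min = a :=
  le_antisymm (Finset.min_le (Finset.left_mem_Ico.2 h))
    (Finset.le_min fun _ hx => WithTop.coe_le_coe.2 (Finset.mem_Ico.1 hx).1)

theorem _root_.Nat.max_Ico {a b : ℕ} (h : a < b) : (Finset.Ico a b).max = WithBot.some (b - 1) :=
  le_antisymm
    (Finset.max_le fun _ hx => WithBot.coe_le_coe.2 (by rw [Finset.mem_Ico] at hx; omega))
    (Finset.le_max (by rw [Finset.mem_Ico]; omega))

namespace LTree

def labels : LTree → Finset ℕ
  | lnil => ∅
  | lnode k l r => insert k (l.labels ∪ r.labels)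

def size : LTree → ℕ
  | lnil => 0
  | lnode _ l r => l.size + r.size + 1

def IntervalLabelled : LTree → Prop
  | lnil => True
  | lnode k l r =>
      (∃ a, (lnode k l r).labels = Finset.Ico a (a + (lnode k l r).size)) ∧
        l.IntervalLabelled ∧ r.IntervalLabelled

def NumberedFrom (t : LTree) (c : ℕ) : Prop :=
  t.labels = Finset.Ico c (c + t.size) ∧ t.IntervalLabelled

theorem numberedFrom_lnode {k a b c : ℕ} {l r : LTree} (hl : l.NumberedFrom a)
    (hr : r.NumberedFrom b)
    (hk : insert k (Finset.Ico a (a + l.size) ∪ Finset.Ico b (b + r.size)) =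
      Finset.Ico c (c + l.size + r.size + 1)) :
    (lnode k l r).NumberedFrom c := by
  have hlab : (lnode k l r).labels = Finset.Ico c (c + (lnode k l r).size) := by
    rw [labels, hl.1, hr.1, hk, size, Nat.add_assoc c, Nat.add_assoc c]
  exact ⟨hlab, ⟨c, hlab⟩, hl.2, hr.2⟩

end LTree

open LTree

theorem rsize_computeRouting (t : LTree) : rsize (computeRouting t) = t.size := by
  induction t with
  | lnil => rfl
  | lnode _ l r ihl ihr => simp only [computeRouting, rsize, size, ihl, ihr]

theorem mnOf_computeRouting (t : LTree) (d : ℕ) :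
    mnOf (computeRouting t) d = t.labels.min.untopD d := by
  cases t with
  | lnil => rfl
  | lnode k l r =>
    rw [computeRouting, mnOf, mnOf_computeRouting l, mnOf_computeRouting r, labels,
      Finset.min_insert, Finset.min_union]
    induction l.labels.min using WithTop.recTopCoe <;>
      induction r.labels.min using WithTop.recTopCoe <;>
      simp only [WithTop.untopD_top, WithTop.untopD_coe, top_inf_eq, inf_top_eq,
        ← WithTop.coe_inf] <;> omega

theorem mxOf_computeRouting (t : LTree) (d : ℕ) :
    mxOf (computeRouting t) d = t.labels.max.unbotD d := by
  cases t with
  | lnil => rfl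
  | lnode k l r =>
    rw [computeRouting, mxOf, mxOf_computeRouting l, mxOf_computeRouting r, labels,
      Finset.max_insert, Finset.max_union]
    induction l.labels.max using WithBot.recBotCoe <;>
      induction r.labels.max using WithBot.recBotCoe <;>
      simp only [WithBot.unbotD_bot, WithBot.unbotD_coe, bot_sup_eq, sup_bot_eq,
        ← WithBot.coe_sup] <;> omega

theorem extremaSpanSize_computeRouting {t : LTree} (ht : t.IntervalLabelled) :
    extremaSpanSize (computeRouting t) := by
  induction t with
  | lnil => trivial
  | lnode k l r ihl ihr =>
    obtain ⟨⟨a, hlab⟩, hl, hr⟩ := ht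
    refine ⟨?_, ihl hl, ihr hr⟩
    have hpos : a < a + (lnode k l r).size := by simp [size]
    change mxOf (computeRouting (lnode k l r)) 0 - mnOf (computeRouting (lnode k l r)) 0 + 1 =
      rsize (computeRouting (lnode k l r))
    rw [mnOf_computeRouting, mxOf_computeRouting, rsize_computeRouting, hlab, Finset.min_Ico hpos,
      Nat.max_Ico hpos, WithTop.untopD_coe, WithBot.unbotD_coe]
    omega

theorem modes_snd_eq_add_size (t : BTree) (c : ℕ) :
    (rootMode t c).2 = c + (rootMode t c).1.size ∧ (preMode t c).2 = c + (preMode t c).1.size ∧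
      (inMode t c).2 = c + (inMode t c).1.size ∧ (postMode t c).2 = c + (postMode t c).1.size := by
  induction t generalizing c with
  | nil => simp [rootMode, preMode, inMode, postMode, size]
  | node l r ihl ihr =>
    simp only [forall_and] at ihl ihr
    obtain ⟨-, hl₂, hl₃, hl₄⟩ := ihl
    obtain ⟨-, hr₂, hr₃, hr₄⟩ := ihr
    simp only [rootMode, preMode, inMode, postMode, size, hl₂, hl₃, hl₄, hr₂, hr₃, hr₄]
    omega

theorem modes_numberedFrom (t : BTree) (c : ℕ) :
    (rootMode t c).1.NumberedFrom c ∧ (preMode t c).1.NumberedFrom c ∧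
      (inMode t c).1.NumberedFrom c ∧ (postMode t c).1.NumberedFrom c := by
  induction t generalizing c with
  | nil => simp [NumberedFrom, rootMode, preMode, inMode, postMode, size, labels,
      IntervalLabelled]
  | node l r ihl ihr =>
    simp only [forall_and] at ihl ihr
    obtain ⟨-, hl₂, hl₃, hl₄⟩ := ihl
    obtain ⟨-, hr₂, hr₃, hr₄⟩ := ihr
    have hsnd_l := modes_snd_eq_add_size l
    have hsnd_r := modes_snd_eq_add_size r
    simp only [forall_and] at hsnd_l hsnd_r
    obtain ⟨-, sl₂, sl₃, sl₄⟩ := hsnd_l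
    obtain ⟨-, -, -, sr₄⟩ := hsnd_r
    refine ⟨numberedFrom_lnode (hl₂ _) (hr₄ _) ?_, numberedFrom_lnode (hl₂ _) (hr₃ _) ?_,
      numberedFrom_lnode (hl₄ _) (hr₂ _) ?_, numberedFrom_lnode (hl₃ _) (hr₄ _) ?_⟩ <;>
    · ext x
      simp only [sl₂, sl₃, sl₄, sr₄, Finset.mem_insert, Finset.mem_union, Finset.mem_Ico]
      omega

theorem cycletree_routing_span (t : BTree) (c : Nat) :
    extremaSpanSize (computeRouting (rootMode t c).1) ∧
    extremaSpanSize (computeRouting (preMode t c).1) ∧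
    extremaSpanSize (computeRouting (inMode t c).1) ∧
    extremaSpanSize (computeRouting (postMode t c).1) := by
  obtain ⟨hroot, hpre, hin, hpost⟩ := modes_numberedFrom t c
  exact ⟨extremaSpanSize_computeRouting hroot.2, extremaSpanSize_computeRouting hpre.2,
    extremaSpanSize_computeRouting hin.2, extremaSpanSize_computeRouting hpost.2⟩

end Retreet
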